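/- arXiv:2505.06199 — 3 statements merged into one kernel-verified Lean document; each statement's English description precedes it below -/
import Mathlib

section
/- Let (Ω, ℱ, ℙ) be a probability space, n ≥ 1, s ≥ 1, and X : Fin s → Fin n → Ω → ℝ integrable random variables. Let 0 = a₀ < a₁ < ⋯ < a_G = s and 0 = c₀ < c₁ < ⋯ < c_{G'} = s be two partitions of the index range {0, …, s−1} into consecutive blocks such that the second partition refines the first (i.e., {a₀, …, a_G} ⊆ {c₀, …, c_{G'}}). Then ∑_{j=1}^{G} 𝔼[min_{i ∈ Fin n} ∑_{g=a_{j−1}}^{a_j − 1} X g i] ≥ ∑_{j=1}^{G'} 𝔼[min_{i ∈ Fin n} ∑_{g=c_{j−1}}^{c_j − 1} X g i]. That is, for replication, the expected job completion time does not increase as the batch size decreases (as the batching is refined). -/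
open MeasureTheory

lemma my_integrable_inf' {Ω ι : Type*} [MeasurableSpace Ω] {ℙ : Measure Ω}
    {t : Finset ι} (ht : t.Nonempty) (f : ι → Ω → ℝ) (hf : ∀ i, Integrable (f i) ℙ) :
    Integrable (fun ω => t.inf' ht (fun i => f i ω)) ℙ := by
  induction ht using Finset.Nonempty.cons_induction with
  | singleton a => simpa using hf a
  | cons a s h hs ih =>
    have e : (fun ω => (Finset.cons a s h).inf' (s.cons_nonempty h) (fun i => f i ω))
        = fun ω => f a ω ⊓ s.inf' hs (fun i => f i ω) := by
      funext ω; exact Finset.inf'_cons hs (fun i => f i ω)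
    rw [e]
    exact (hf a).inf ih

lemma my_block_exists {G s : ℕ} (a : Fin (G+1) → ℕ)
    (ha0 : a 0 = 0) (haG : a (Fin.last G) = s) {x : ℕ} (hx : x < s) :
    ∃ j : Fin G, a j.castSucc ≤ x ∧ x < a j.succ := by
  classical
  set T : Finset (Fin (G+1)) := Finset.univ.filter (fun j => a j ≤ x) with hT
  have h0 : (0 : Fin (G+1)) ∈ T := by simp [hT, ha0]
  have hTne : T.Nonempty := ⟨0, h0⟩
  set j := T.max' hTne with hj
  have hjmem : j ∈ T := T.max'_mem hTne
  have hjle : a j ≤ x := by simpa [hT] using hjmem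
  have hjne : j ≠ Fin.last G := by
    intro h
    rw [h, haG] at hjle; omega
  obtain ⟨j0, hj0⟩ : ∃ j0 : Fin G, j0.castSucc = j :=
    ⟨⟨j.val, Fin.lt_last_iff_ne_last.mpr hjne⟩, by ext; simp⟩
  refine ⟨j0, by rw [hj0]; exact hjle, ?_⟩
  by_contra h
  push_neg at h
  have hmem : j0.succ ∈ T := by simp [hT, h]
  have hle := T.le_max' _ hmem
  rw [← hj, ← hj0] at hle
  simp [Fin.le_def] at hle

lemma my_block_unique {G : ℕ} (a : Fin (G+1) → ℕ) (ha : StrictMono a)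
    {x : ℕ} {j j2 : Fin G} (h1 : a j.castSucc ≤ x) (h2 : x < a j.succ)
    (h3 : a j2.castSucc ≤ x) (h4 : x < a j2.succ) : j = j2 := by
  by_contra hne
  rcases lt_or_gt_of_ne hne with h | h
  · have : a j.succ ≤ a j2.castSucc := ha.monotone (by simp [Fin.le_def]; omega)
    omega
  · have : a j2.succ ≤ a j.castSucc := ha.monotone (by simp [Fin.le_def]; omega)
    omega

/-- For replication, the expected job completion time does not increase as the batching is
refined: if the partition `c` of `{0, …, s-1}` into consecutive blocks refines the
partition `a`, then the total expected completion time (sum over batch generations of the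
expectation of the fastest worker's batch time) for `a` is at least that for `c`. -/
theorem replication_refined_batching_le
    {Ω : Type*} [MeasurableSpace Ω] (ℙ : Measure Ω) [IsProbabilityMeasure ℙ]
    (n s : ℕ) (hn : 1 ≤ n) (hs : 1 ≤ s)
    (X : Fin s → Fin n → Ω → ℝ)
    (hX : ∀ g i, Integrable (X g i) ℙ)
    (G G' : ℕ)
    (a : Fin (G + 1) → ℕ) (c : Fin (G' + 1) → ℕ)
    (ha_mono : StrictMono a) (ha0 : a 0 = 0) (haG : a (Fin.last G) = s)
    (hc_mono : StrictMono c) (hc0 : c 0 = 0) (hcG' : c (Fin.last G') = s)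
    (h_refines : Set.range a ⊆ Set.range c) :
    (∑ j : Fin G, ∫ ω, (Finset.univ : Finset (Fin n)).inf' ⟨⟨0, hn⟩, Finset.mem_univ _⟩
        (fun i => ∑ g ∈ Finset.univ.filter
          (fun g : Fin s => a j.castSucc ≤ (g : ℕ) ∧ (g : ℕ) < a j.succ), X g i ω) ∂ℙ) ≥
      ∑ j : Fin G', ∫ ω, (Finset.univ : Finset (Fin n)).inf' ⟨⟨0, hn⟩, Finset.mem_univ _⟩
        (fun i => ∑ g ∈ Finset.univ.filter
          (fun g : Fin s => c j.castSucc ≤ (g : ℕ) ∧ (g : ℕ) < c j.succ), X g i ω) ∂ℙ := by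
  classical
  set hne : (Finset.univ : Finset (Fin n)).Nonempty := ⟨⟨0, hn⟩, Finset.mem_univ _⟩ with hne_def
  set blockA : Fin G → Finset (Fin s) := fun j =>
    Finset.univ.filter (fun g : Fin s => a j.castSucc ≤ (g : ℕ) ∧ (g : ℕ) < a j.succ) with hbA
  set blockC : Fin G' → Finset (Fin s) := fun j =>
    Finset.univ.filter (fun g : Fin s => c j.castSucc ≤ (g : ℕ) ∧ (g : ℕ) < c j.succ) with hbC
  -- the coarse block containing each fine block
  have hcx : ∀ j' : Fin G', c j'.castSucc < s := by
    intro j'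
    calc c j'.castSucc < c (Fin.last G') :=
          hc_mono (Fin.castSucc_lt_last j')
      _ = s := hcG'
  have hex : ∀ j' : Fin G', ∃ j : Fin G, a j.castSucc ≤ c j'.castSucc ∧ c j'.castSucc < a j.succ :=
    fun j' => my_block_exists a ha0 haG (hcx j')
  set f : Fin G' → Fin G := fun j' => (hex j').choose with hf_def
  have hf1 : ∀ j', a (f j').castSucc ≤ c j'.castSucc := fun j' => (hex j').choose_spec.1
  have hf2 : ∀ j', c j'.castSucc < a (f j').succ := fun j' => (hex j').choose_spec.2
  have hf3 : ∀ j', c j'.succ ≤ a (f j').succ := by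
    intro j'
    obtain ⟨k, hk⟩ := h_refines ⟨(f j').succ, rfl⟩
    have hlt : c j'.castSucc < c k := by rw [hk]; exact hf2 j'
    have : j'.castSucc < k := hc_mono.lt_iff_lt.mp hlt
    have hsk : j'.succ ≤ k := by simpa [Fin.le_def, Fin.lt_def] using this
    calc c j'.succ ≤ c k := hc_mono.monotone hsk
      _ = a (f j').succ := hk
  -- coarse blocks decompose into fine blocks
  have hkey : ∀ j : Fin G,
      blockA j = (Finset.univ.filter (fun j' => f j' = j)).biUnion blockC := by
    intro j
    ext g
    simp only [hbA, hbC, Finset.mem_biUnion, Finset.mem_filter, Finset.mem_univ, true_and]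
    constructor
    · rintro ⟨h1, h2⟩
      obtain ⟨j', hj'1, hj'2⟩ := my_block_exists c hc0 hcG' g.isLt
      refine ⟨j', ?_, hj'1, hj'2⟩
      -- show `f j' = j` by uniqueness at `x = c j'.castSucc`
      obtain ⟨m, hm⟩ := h_refines ⟨j.castSucc, rfl⟩
      have hm_le : c m ≤ c j'.castSucc := by
        apply hc_mono.monotone
        have : c m < c j'.succ := by rw [hm]; omega
        have := hc_mono.lt_iff_lt.mp this
        simpa [Fin.le_def, Fin.lt_def] using Nat.lt_succ_iff.mp (by simpa [Fin.lt_def] using this)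
      have hA1 : a j.castSucc ≤ c j'.castSucc := by rw [← hm]; exact hm_le
      have hA2 : c j'.castSucc < a j.succ := lt_of_le_of_lt hj'1 h2
      exact my_block_unique a ha_mono (hf1 j') (hf2 j') hA1 hA2
    · rintro ⟨j', hfj, h1, h2⟩
      subst hfj
      exact ⟨le_trans (hf1 j') h1, lt_of_lt_of_le h2 (hf3 j')⟩
  have hdisj : ∀ j : Fin G,
      (↑(Finset.univ.filter (fun j' => f j' = j)) : Set (Fin G')).PairwiseDisjoint blockC := by
    intro j j1 _ j2 _ hne12
    refine Finset.disjoint_left.mpr ?_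
    intro g hg1 hg2
    simp only [hbC, Finset.mem_filter, Finset.mem_univ, true_and] at hg1 hg2
    exact hne12 (my_block_unique c hc_mono hg1.1 hg1.2 hg2.1 hg2.2)
  -- the sum over a coarse block equals the sum of sums over its fine blocks
  have hsum : ∀ (j : Fin G) (F : Fin s → ℝ),
      ∑ g ∈ blockA j, F g =
        ∑ j' ∈ Finset.univ.filter (fun j' => f j' = j), ∑ g ∈ blockC j', F g := by
    intro j F
    rw [hkey j, Finset.sum_biUnion (hdisj j)]
  -- integrability facts
  have hintC : ∀ j' : Fin G',
      Integrable (fun ω => Finset.univ.inf' hne (fun i => ∑ g ∈ blockC j', X g i ω)) ℙ := by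
    intro j'
    exact my_integrable_inf' hne _ (fun i => integrable_finset_sum _ (fun g _ => hX g i))
  have hintA : ∀ j : Fin G,
      Integrable (fun ω => Finset.univ.inf' hne (fun i => ∑ g ∈ blockA j, X g i ω)) ℙ := by
    intro j
    exact my_integrable_inf' hne _ (fun i => integrable_finset_sum _ (fun g _ => hX g i))
  -- per-coarse-block inequality
  have step : ∀ j : Fin G,
      ∑ j' ∈ Finset.univ.filter (fun j' => f j' = j),
        ∫ ω, Finset.univ.inf' hne (fun i => ∑ g ∈ blockC j', X g i ω) ∂ℙ ≤
      ∫ ω, Finset.univ.inf' hne (fun i => ∑ g ∈ blockA j, X g i ω) ∂ℙ := by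
    intro j
    rw [← integral_finset_sum _ (fun j' _ => hintC j')]
    refine integral_mono (integrable_finset_sum _ (fun j' _ => hintC j')) (hintA j) ?_
    intro ω
    apply Finset.le_inf'
    intro i _
    rw [hsum j (fun g => X g i ω)]
    exact Finset.sum_le_sum (fun j' _ => Finset.inf'_le _ (Finset.mem_univ i))
  -- assemble
  have hfib : ∑ j' : Fin G', ∫ ω, Finset.univ.inf' hne (fun i => ∑ g ∈ blockC j', X g i ω) ∂ℙ =
      ∑ j : Fin G, ∑ j' ∈ Finset.univ.filter (fun j' => f j' = j),
        ∫ ω, Finset.univ.inf' hne (fun i => ∑ g ∈ blockC j', X g i ω) ∂ℙ :=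
    (Finset.sum_fiberwise _ _ _).symm
  calc ∑ j : Fin G', ∫ ω, Finset.univ.inf' hne (fun i => ∑ g ∈ blockC j, X g i ω) ∂ℙ
      = ∑ j : Fin G, ∑ j' ∈ Finset.univ.filter (fun j' => f j' = j),
          ∫ ω, Finset.univ.inf' hne (fun i => ∑ g ∈ blockC j', X g i ω) ∂ℙ := hfib
    _ ≤ ∑ j : Fin G, ∫ ω, Finset.univ.inf' hne (fun i => ∑ g ∈ blockA j, X g i ω) ∂ℙ :=
        Finset.sum_le_sum (fun j _ => step j)
end

section
/- Let b ≥ 1 be an integer and let R be a real number with 1/2 ≤ R < 1. Let m = m(b, R) be the unique positive real with P(b, m) = R, where P(b, m) = (1/(b−1)!) ∫₀^m t^{b−1} e^{−t} dt. Then m > R·b. -/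
/-- The regularized lower incomplete gamma function
`P (b, m) = (1/(b-1)!) ∫₀^m t^(b-1) e^(-t) dt` for integer shape `b ≥ 1`. -/
noncomputable def regIncGamma (b : ℕ) (m : ℝ) : ℝ :=
  (1 / (Nat.factorial (b - 1) : ℝ)) * ∫ t in (0:ℝ)..m, t ^ (b - 1) * Real.exp (-t)

/-!
For `b = n + 1` and `x > 0`, `P(b, x) = e^{-x} ∑_{k > n} x^k / k!` is the probability that a
Poisson(`x`) variable `N` is at least `b`. Since `k · x^k / k! = x · x^(k-1) / (k-1)!`, Markov's
inequality `P(N ≥ b) < E N / b = x / b` is a termwise comparison of exponential series, strict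
because `N > b` has positive probability. If `m ≤ R b`, monotonicity of `P(b, ·)` then gives
`R = P(b, m) ≤ P(b, R b) < R`.
-/

open Real Finset
open scoped Nat

theorem hasDerivAt_exp_neg_mul_sum_range_pow_div_factorial (n : ℕ) (x : ℝ) :
    HasDerivAt (fun y : ℝ ↦ exp (-y) * ∑ k ∈ range (n + 1), y ^ k / k !)
      (-(exp (-x) * (x ^ n / n !))) x := by
  have hsum : HasDerivAt (fun y : ℝ ↦ ∑ k ∈ range (n + 1), y ^ k / k !)
      (∑ k ∈ range n, x ^ k / k !) x := by
    refine (HasDerivAt.fun_sum fun k _ ↦ (hasDerivAt_pow k x).div_const (k ! : ℝ)).congr_deriv ?_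
    rw [sum_range_succ']
    refine (add_eq_left.2 (by simp)).trans (sum_congr rfl fun k _ ↦ ?_)
    rw [Nat.factorial_succ]
    push_cast
    field_simp
  refine ((hasDerivAt_neg x).exp.mul hsum).congr_deriv ?_
  rw [sum_range_succ]
  ring

theorem integral_pow_mul_exp_neg (n : ℕ) (x : ℝ) :
    ∫ t in (0 : ℝ)..x, t ^ n * exp (-t) =
      n ! * (1 - exp (-x) * ∑ k ∈ range (n + 1), x ^ k / k !) := by
  have hderiv : ∀ y, HasDerivAt
      (fun y : ℝ ↦ n ! * (1 - exp (-y) * ∑ k ∈ range (n + 1), y ^ k / k !))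
      (y ^ n * exp (-y)) y := fun y ↦ by
    refine (((hasDerivAt_exp_neg_mul_sum_range_pow_div_factorial n y).const_sub 1).const_mul
      (n ! : ℝ)).congr_deriv ?_
    field_simp
  rw [intervalIntegral.integral_eq_sub_of_hasDerivAt (fun y _ ↦ hderiv y)
    ((by fun_prop : Continuous fun t : ℝ ↦ t ^ n * exp (-t)).intervalIntegrable 0 x)]
  simp [sum_range_succ']

theorem regIncGamma_succ (n : ℕ) (x : ℝ) :
    regIncGamma (n + 1) x = 1 - exp (-x) * ∑ k ∈ range (n + 1), x ^ k / k ! := by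
  rw [regIncGamma, Nat.add_sub_cancel, integral_pow_mul_exp_neg, one_div,
    inv_mul_cancel_left₀ (by positivity)]

theorem pow_succ_div_factorial_succ (x : ℝ) (k : ℕ) :
    x ^ (k + 1) / (k + 1)! = x / (k + 1) * (x ^ k / k !) := by
  rw [Nat.factorial_succ, pow_succ', Nat.cast_mul, div_mul_div_comm]
  push_cast
  ring

theorem exp_sub_sum_range_succ_lt {x : ℝ} (hx : 0 < x) (n : ℕ) :
    exp x - ∑ k ∈ range (n + 1), x ^ k / k ! < x / (n + 1) * exp x := by
  set f : ℕ → ℝ := fun k ↦ (x ^ k / k !)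
  have hexp : HasSum f (exp x) := exp_eq_exp_ℝ ▸ NormedSpace.expSeries_div_hasSum_exp x
  have hf : Summable f := hexp.summable
  have hstep : ∀ i, f (i + n + 1) = x / (i + n + 1) * f (i + n) := fun i ↦ by
    simpa [f, add_assoc] using pow_succ_div_factorial_succ x (i + n)
  calc exp x - ∑ k ∈ range (n + 1), f k
      = ∑' i, f (i + n + 1) := by
        rw [← hexp.tsum_eq, ← hf.sum_add_tsum_nat_add (n + 1)]
        simp [add_assoc]
    _ < ∑' i, x / (n + 1) * f (i + n) := by
        refine Summable.tsum_lt_tsum (i := 1) (fun i ↦ ?_) ?_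
          ((summable_nat_add_iff (n + 1)).2 hf |>.congr fun i ↦ by simp [add_assoc])
          (((summable_nat_add_iff n).2 hf).mul_left _)
        · rw [hstep]; gcongr; simp
        · rw [hstep]; gcongr; simp
    _ ≤ x / (n + 1) * exp x := by
        rw [tsum_mul_left, ← hexp.tsum_eq, ← hf.sum_add_tsum_nat_add n]
        gcongr
        exact le_add_of_nonneg_left (sum_nonneg fun k _ ↦ by positivity)

theorem regIncGamma_succ_lt {x : ℝ} (hx : 0 < x) (n : ℕ) :
    regIncGamma (n + 1) x < x / (n + 1) := by
  calc regIncGamma (n + 1) x = exp (-x) * (exp x - ∑ k ∈ range (n + 1), x ^ k / k !) := by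
        rw [regIncGamma_succ, mul_sub, ← exp_add, neg_add_cancel, exp_zero]
    _ < exp (-x) * (x / (n + 1) * exp x) := by gcongr; exact exp_sub_sum_range_succ_lt hx n
    _ = x / (n + 1) := by rw [mul_left_comm, ← exp_add, neg_add_cancel, exp_zero, mul_one]

theorem natCast_mul_regIncGamma_lt {x : ℝ} (hx : 0 < x) (b : ℕ) : b * regIncGamma b x < x := by
  cases b with
  | zero => simpa using hx
  | succ n =>
    push_cast
    rw [← lt_div_iff₀' (by positivity)]
    exact regIncGamma_succ_lt hx n

theorem regIncGamma_monotoneOn (b : ℕ) : MonotoneOn (regIncGamma b) (Set.Ici 0) :=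
  fun a ha x _ hax ↦ by
    refine mul_le_mul_of_nonneg_left (intervalIntegral.integral_mono_interval le_rfl ha hax ?_ ?_)
      (by positivity)
    · exact MeasureTheory.ae_restrict_of_forall_mem measurableSet_Ioc fun t ht ↦
        mul_nonneg (pow_nonneg ht.1.le _) (exp_pos _).le
    · exact (by fun_prop : Continuous fun t : ℝ ↦ t ^ (b - 1) * exp (-t)).intervalIntegrable _ _

theorem gamma_quantile_gt_rate_mul_shape_general (b : ℕ) (R : ℝ) (m : ℝ) (hm_pos : 0 < m)
    (hm : regIncGamma b m = R) :
    m > R * b := by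
  by_contra! hle
  have hmono : R ≤ regIncGamma b (R * b) := calc
    R = regIncGamma b m := hm.symm
    _ ≤ regIncGamma b (R * b) := regIncGamma_monotoneOn b hm_pos.le (hm_pos.le.trans hle) hle
  have hlt := natCast_mul_regIncGamma_lt (hm_pos.trans_le hle) b
  have := mul_le_mul_of_nonneg_left hmono (Nat.cast_nonneg b : (0 : ℝ) ≤ b)
  linarith

/-- For `b ≥ 1` and `1/2 ≤ R < 1`, the `R`-quantile `m` of the Gamma(b,1) distribution
satisfies `m > R·b`. -/
theorem gamma_quantile_gt_rate_mul_shape (b : ℕ) (hb : 1 ≤ b) (R : ℝ)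
    (hR0 : 1 / 2 ≤ R) (hR1 : R < 1) (m : ℝ) (hm_pos : 0 < m)
    (hm : regIncGamma b m = R) :
    m > R * b :=
  gamma_quantile_gt_rate_mul_shape_general b R m hm_pos hm
end

section
/- Fix a real R with 0 < R < 1, and for each integer b ≥ 1 let m(b) be the unique positive real with P(b, m(b)) = R, where P(b, m) = (1/(b−1)!) ∫₀^m t^{b−1} e^{−t} dt. Then for every integer s ≥ 1, the minimum of m(b)/b over integers b with 1 ≤ b ≤ s is attained at b = 1 or at b = s; that is, min_{1 ≤ b ≤ s} m(b)/b = min(m(1), m(s)/s). -/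
open Real Set intervalIntegral

lemma integral_pow_succ_mul_exp_neg (k : ℕ) (x : ℝ) :
    ∫ t in (0:ℝ)..x, t ^ (k + 1) * exp (-t)
      = (k + 1) * (∫ t in (0:ℝ)..x, t ^ k * exp (-t)) - x ^ (k + 1) * exp (-x) := by
  have hibp := integral_mul_deriv_eq_deriv_mul (a := 0) (b := x)
    (u := fun t => t ^ (k + 1)) (u' := fun t => (k + 1) * t ^ k)
    (v := fun t => -exp (-t)) (v' := fun t => exp (-t))
    (fun t _ => by simpa using hasDerivAt_pow (k + 1) t)
    (fun t _ => by simpa using (hasDerivAt_neg t).exp.fun_neg)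
    ((by fun_prop : Continuous fun t : ℝ => (k + 1) * t ^ k).intervalIntegrable _ _)
    ((by fun_prop : Continuous fun t : ℝ => exp (-t)).intervalIntegrable _ _)
  have hrhs : ∫ t in (0:ℝ)..x, (k + 1) * t ^ k * -exp (-t)
      = -((k + 1) * ∫ t in (0:ℝ)..x, t ^ k * exp (-t)) := by
    rw [← integral_const_mul, ← integral_neg]
    congr 1 with t
    ring
  rw [hibp, hrhs, zero_pow k.succ_ne_zero]
  ring

lemma regIncGamma_eq_regIncGamma_succ_add {n : ℕ} (hn : n ≠ 0) (x : ℝ) :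
    regIncGamma n x = regIncGamma (n + 1) x + x ^ n * exp (-x) / n.factorial := by
  obtain ⟨k, rfl⟩ := Nat.exists_eq_succ_of_ne_zero hn
  simp only [regIncGamma, Nat.add_sub_cancel, integral_pow_succ_mul_exp_neg, Nat.factorial_succ]
  push_cast
  field_simp
  ring

lemma regIncGamma_strictMonoOn (n : ℕ) : StrictMonoOn (regIncGamma n) (Ici 0) := by
  intro a ha b _ hab
  have hcont : Continuous fun t : ℝ => t ^ (n - 1) * exp (-t) := by fun_prop
  have hsplit := integral_add_adjacent_intervals (μ := MeasureTheory.volume)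
    (hcont.intervalIntegrable 0 a) (hcont.intervalIntegrable a b)
  have hpos : 0 < ∫ t in a..b, t ^ (n - 1) * exp (-t) :=
    intervalIntegral_pos_of_pos_on (hcont.intervalIntegrable a b)
      (fun t ht => by have : 0 < t := (mem_Ici.mp ha).trans_lt ht.1; positivity) hab
  unfold regIncGamma
  gcongr
  linarith

lemma one_add_div_pow_le_one_add_div_succ_pow {x : ℝ} (hx : 0 ≤ x) (n : ℕ) :
    (1 + x / n) ^ n ≤ (1 + x / (n + 1)) ^ (n + 1) := by
  rcases Nat.eq_zero_or_pos n with rfl | hn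
  · simpa using hx
  have hn' : (0 : ℝ) < n := by exact_mod_cast hn
  have hbern := one_add_mul_self_le_rpow_one_add (s := x / (n + 1))
    (by linarith [show 0 ≤ x / (n + 1) by positivity]) (p := (n + 1) / n)
    (by rw [le_div_iff₀ hn']; linarith)
  have hbase : 1 + (n + 1) / n * (x / (n + 1)) = 1 + x / n := by field_simp
  rw [hbase] at hbern
  calc (1 + x / n) ^ n ≤ ((1 + x / (n + 1)) ^ (((n : ℝ) + 1) / n)) ^ n := by gcongr
    _ = (1 + x / (n + 1)) ^ (n + 1) := by
      rw [← rpow_natCast, ← rpow_mul (by positivity), div_mul_cancel₀ _ hn'.ne',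
        ← rpow_natCast]
      push_cast; rfl

noncomputable def gammaIncrementRatio (α : ℝ) (n : ℕ) : ℝ :=
  ∫ u in (0:ℝ)..α, (1 + u / (α * n)) ^ n * exp (-u)

lemma gammaIncrementRatio_le_succ {α : ℝ} (hα : 0 ≤ α) (n : ℕ) :
    gammaIncrementRatio α n ≤ gammaIncrementRatio α (n + 1) := by
  refine integral_mono_on hα (Continuous.intervalIntegrable (by fun_prop) _ _)
    (Continuous.intervalIntegrable (by fun_prop) _ _) fun u hu => ?_
  have hpow := one_add_div_pow_le_one_add_div_succ_pow (div_nonneg hu.1 hα) n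
  simp only [div_div] at hpow
  push_cast
  gcongr

lemma integral_pow_mul_exp_neg_eq_mul_gammaIncrementRatio {α : ℝ} {n : ℕ}
    (hαn : α * n ≠ 0) :
    ∫ t in α * n..α * (n + 1), t ^ n * exp (-t)
      = (α * n) ^ n * exp (-(α * n)) * gammaIncrementRatio α n := by
  have hshift := integral_comp_add_right (a := 0) (b := α) (fun t => t ^ n * exp (-t)) (α * n)
  rw [zero_add] at hshift
  rw [mul_add_one, add_comm _ α, ← hshift, gammaIncrementRatio, ← integral_const_mul]
  congr 1 with u
  have hfactor : u + α * n = α * n * (1 + u / (α * n)) := by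
    rw [mul_one_add, mul_div_cancel₀ _ hαn, add_comm]
  rw [neg_add, exp_add, hfactor, mul_pow]
  ring

lemma regIncGamma_succ_sub_eq {α : ℝ} {n : ℕ} (hn : n ≠ 0) (hα : α ≠ 0) :
    regIncGamma (n + 1) (α * (n + 1)) - regIncGamma n (α * n)
      = (α * n) ^ n * exp (-(α * n)) / n.factorial * (gammaIncrementRatio α n - 1) := by
  have hαn : α * n ≠ 0 := mul_ne_zero hα (Nat.cast_ne_zero.mpr hn)
  have hcont : Continuous fun t : ℝ => t ^ n * exp (-t) := by fun_prop
  have hinc : regIncGamma (n + 1) (α * (n + 1)) - regIncGamma (n + 1) (α * n)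
      = (α * n) ^ n * exp (-(α * n)) / n.factorial * gammaIncrementRatio α n := by
    simp only [regIncGamma, Nat.add_sub_cancel, ← mul_sub,
      integral_interval_sub_left (hcont.intervalIntegrable _ _) (hcont.intervalIntegrable _ _),
      integral_pow_mul_exp_neg_eq_mul_gammaIncrementRatio hαn]
    ring
  rw [regIncGamma_eq_regIncGamma_succ_add hn]
  linear_combination hinc

lemma regIncGamma_lt_succ_iff {α : ℝ} {n : ℕ} (hn : n ≠ 0) (hα : 0 < α) :
    regIncGamma n (α * n) < regIncGamma (n + 1) (α * (n + 1)) ↔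
      1 < gammaIncrementRatio α n := by
  have hn' : (0 : ℝ) < n := by positivity
  rw [← sub_pos, regIncGamma_succ_sub_eq hn hα.ne', mul_pos_iff_of_pos_left (by positivity),
    sub_pos]

lemma regIncGamma_lt_succ_of_lt {α : ℝ} {n : ℕ} (hn : n ≠ 0) (hα : 0 < α)
    (h : regIncGamma n (α * n) < regIncGamma (n + 1) (α * (n + 1))) :
    regIncGamma (n + 1) (α * (n + 1)) < regIncGamma (n + 2) (α * (n + 2)) := by
  have hJ := ((regIncGamma_lt_succ_iff hn hα).1 h).trans_le (gammaIncrementRatio_le_succ hα.le n)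
  have := (regIncGamma_lt_succ_iff n.succ_ne_zero hα).2 hJ
  push_cast at this
  convert this using 3
  ring

lemma quantile_div_succ_succ_lt_of_succ_lt {R : ℝ} {m : ℕ → ℝ}
    (hm : ∀ b : ℕ, 1 ≤ b → 0 < m b ∧ regIncGamma b (m b) = R) {n : ℕ} (hn : 1 ≤ n)
    (hdesc : m (n + 1) / ((n + 1 : ℕ) : ℝ) < m n / n) :
    m (n + 2) / ((n + 2 : ℕ) : ℝ) < m (n + 1) / ((n + 1 : ℕ) : ℝ) := by
  obtain ⟨hm₀_pos, hm₀⟩ := hm n hn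
  obtain ⟨hm₁_pos, hm₁⟩ := hm (n + 1) (by omega)
  obtain ⟨hm₂_pos, hm₂⟩ := hm (n + 2) (by omega)
  have hn' : (0 : ℝ) < n := by exact_mod_cast hn
  set α := m (n + 1) / ((n + 1 : ℕ) : ℝ)
  have hα : 0 < α := by positivity
  have hαm₁ : α * (n + 1) = m (n + 1) := by
    simp only [α]; push_cast; field_simp
  have hlow : regIncGamma n (α * n) < regIncGamma (n + 1) (α * (n + 1)) := by
    rw [hαm₁, hm₁, ← hm₀]
    exact regIncGamma_strictMonoOn n (by positivity : (0 : ℝ) ≤ α * n) hm₀_pos.le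
      ((lt_div_iff₀ hn').1 hdesc)
  have hhigh := regIncGamma_lt_succ_of_lt (by omega) hα hlow
  rw [hαm₁, hm₁, ← hm₂] at hhigh
  rw [div_lt_iff₀ (by positivity)]
  push_cast
  exact (regIncGamma_strictMonoOn (n + 2)).lt_iff_lt hm₂_pos.le
    (by positivity : (0 : ℝ) ≤ α * (n + 2)) |>.1 hhigh

lemma min_le_of_descent_persists {α : Type*} [LinearOrder α] {f : ℕ → α}
    (hstep : ∀ n, 1 ≤ n → f (n + 1) < f n → f (n + 2) < f (n + 1))
    {b s : ℕ} (hb : 1 ≤ b) (hbs : b ≤ s) : min (f 1) (f s) ≤ f b := by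
  by_cases hasc : ∀ n, 1 ≤ n → n < b → f n ≤ f (n + 1)
  · refine min_le_of_left_le ?_
    clear hbs
    induction b, hb using Nat.le_induction with
    | base => exact le_rfl
    | succ b hb ih =>
      exact (ih fun n hn hnb => hasc n hn (by omega)).trans (hasc b hb (by omega))
  · push Not at hasc
    obtain ⟨c, hc, hcb, hdesc⟩ := hasc
    have hdesc_from : ∀ n, c ≤ n → f (n + 1) < f n := by
      intro n hn
      induction n, hn using Nat.le_induction with
      | base => exact hdesc
      | succ n hn ih => exact hstep n (hc.trans hn) ih
    exact min_le_of_right_le <| Nat.rel_of_forall_rel_succ_of_le_of_le (· ≥ ·)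
      (fun n hn => (hdesc_from n hn).le) hcb.le hbs

theorem optimal_batch_size_extreme_general (R : ℝ)
    (m : ℕ → ℝ) (hm : ∀ b : ℕ, 1 ≤ b → 0 < m b ∧ regIncGamma b (m b) = R) :
    ∀ s : ℕ, (hs : 1 ≤ s) →
      (Finset.Icc 1 s).inf' (Finset.nonempty_Icc.mpr hs)
          (fun b => m b / (b : ℝ)) = min (m 1) (m s / (s : ℝ)) := by
  intro s hs
  set f : ℕ → ℝ := fun b => m b / (b : ℝ)
  refine le_antisymm (le_min ?_ ?_) (Finset.le_inf' _ _ fun b hb => ?_)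
  · simpa only [f, Nat.cast_one, div_one] using Finset.inf'_le f (Finset.left_mem_Icc.2 hs)
  · exact Finset.inf'_le f (Finset.right_mem_Icc.2 hs)
  · obtain ⟨hb, hbs⟩ := Finset.mem_Icc.1 hb
    simpa [f] using min_le_of_descent_persists (f := f)
      (fun n hn => quantile_div_succ_succ_lt_of_succ_lt hm hn) hb hbs

/-- For a fixed code rate `R ∈ (0,1)` and `m b` the `R`-quantile of Gamma(b,1),
the minimum of `m b / b` over `1 ≤ b ≤ s` is attained at `b = 1` or `b = s`:
the optimal batch size is either the minimum or the maximum. -/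
theorem optimal_batch_size_extreme (R : ℝ) (hR0 : 0 < R) (hR1 : R < 1)
    (m : ℕ → ℝ) (hm : ∀ b : ℕ, 1 ≤ b → 0 < m b ∧ regIncGamma b (m b) = R) :
    ∀ s : ℕ, (hs : 1 ≤ s) →
      (Finset.Icc 1 s).inf' (Finset.nonempty_Icc.mpr hs)
          (fun b => m b / (b : ℝ)) = min (m 1) (m s / (s : ℝ)) :=
  optimal_batch_size_extreme_general R m hm
end
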